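/- Let n > 2 and let v = (v₁,…,vₙ) be a basis of ℂⁿ whose nonorthogonality graph is connected. Then 𝒟_v is not maximal antisymmetric: there exists an antisymmetric operator algebra in Mₙ(ℂ) that properly contains 𝒟_v. -/

import Mathlib

open Matrix ContinuousLinearMap

noncomputable section

abbrev Mat (n : ℕ) := Matrix (Fin n) (Fin n) ℂ
abbrev Euc (n : ℕ) := EuclideanSpace ℂ (Fin n)

/-- An operator algebra: a complex linear subspace of matrices closed under multiplication. -/
def IsOpAlg {n : ℕ} (S : Set (Mat n)) : Prop :=
  0 ∈ S ∧ (∀ A ∈ S, ∀ B ∈ S, A + B ∈ S) ∧ (∀ (c : ℂ), ∀ A ∈ S, c • A ∈ S) ∧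
    (∀ A ∈ S, ∀ B ∈ S, A * B ∈ S)

/-- Antisymmetry: `𝒜 ∩ 𝒜* ⊆ ℂ·I`. -/
def Antisym {n : ℕ} (S : Set (Mat n)) : Prop :=
  ∀ A ∈ S, Aᴴ ∈ S → ∃ c : ℂ, A = c • (1 : Mat n)

/-- The operator on Euclidean space corresponding to a matrix. -/
def opOf {n : ℕ} (A : Mat n) : Euc n →L[ℂ] Euc n := Matrix.toEuclideanCLM (𝕜 := ℂ) A

/-- Orthogonal projection onto `E` as an endomorphism of `ℂⁿ`. -/
def oproj {n : ℕ} (E : Submodule ℂ (Euc n)) : Euc n →L[ℂ] Euc n :=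
  E.subtypeL ∘L E.orthogonalProjection

def InvariantSub {n : ℕ} (S : Set (Mat n)) (E : Submodule ℂ (Euc n)) : Prop :=
  ∀ A ∈ S, ∀ x ∈ E, opOf A x ∈ E

def SemiInvariantSub {n : ℕ} (S : Set (Mat n)) (E : Submodule ℂ (Euc n)) : Prop :=
  ∃ E₁ E₂ : Submodule ℂ (Euc n), InvariantSub S E₁ ∧ InvariantSub S E₂ ∧ E₂ ≤ E₁ ∧ E = E₁ ⊓ E₂ᗮ

/-- The compression `PAP` of a matrix to a subspace. -/
def compr {n : ℕ} (E : Submodule ℂ (Euc n)) (A : Mat n) : Euc n →L[ℂ] Euc n :=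
  oproj E ∘L opOf A ∘L oproj E

/-- Hereditary antisymmetry: the compression to every semi-invariant subspace is antisymmetric. -/
def HerAntisym {n : ℕ} (S : Set (Mat n)) : Prop :=
  ∀ E : Submodule ℂ (Euc n), SemiInvariantSub S E →
    ∀ A ∈ S, ∀ B ∈ S, compr E A = ContinuousLinearMap.adjoint (compr E B) →
      ∃ c : ℂ, compr E A = c • oproj E

/-- `𝒟_v`: the matrices for which every `vᵢ` is an eigenvector. -/
def Dv {n : ℕ} (v : Module.Basis (Fin n) ℂ (Euc n)) : Set (Mat n) :=
  {A | ∀ i : Fin n, ∃ μ : ℂ, opOf A (v i) = μ • v i}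

/-!
Pick a vertex `q` whose removal leaves the nonorthogonality graph connected, a neighbour `s`
of `q` and a third vertex `t`. Writing `u_p` for the component of `v q` orthogonal to `v p`,
either `⟪v t, u_s⟫ ≠ 0` or `⟪v s, u_t⟫ ≠ 0`: otherwise `u_s - u_t ∈ span {v s, v t}` is
orthogonal to `v s, v t`, so vanishes, forcing `⟪v s, v q⟫ = 0`. This gives `p, r ≠ q` with
`⟪v r, u_p⟫ ≠ 0`, i.e. no nonzero vector of `span {v q, v p}` is orthogonal to both `v p, v r`.

Let `E` map `v q ↦ v p` and kill the other `v i`. Then `𝒟_v + ℂ E` is an algebra, since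
`D E, E D ∈ ℂ E` for `D ∈ 𝒟_v` and `E² = 0`. If `A = D + c E` and `A*` both lie in it, then
`⟪A* v i, v j⟫ = ⟪v i, A v j⟫` for `i, j ≠ q` makes the eigenvalues of `D` off `q` a common
value `ν` along edges of the graph with `q` removed; for `k ≠ q` it then gives
`(λ_q - ν) v q + c v p = A v q - ν v q ⊥ v k`, so `λ_q = ν`, `c = 0` and `A = ν I`.
-/

open scoped InnerProductSpace ComplexConjugate

namespace SimpleGraph

variable {V α : Type*} {G : SimpleGraph V}

theorem Preconnected.eq_of_forall_adj (hG : G.Preconnected) {f : V → α}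
    (hf : ∀ u v, G.Adj u v → f u = f v) (u v : V) : f u = f v := by
  obtain ⟨w⟩ := hG u v
  induction w with
  | nil => rfl
  | cons h _ ih => exact (hf _ _ h).trans ih

end SimpleGraph

section InnerProductSpace

variable {𝕜 E ι : Type*} [RCLike 𝕜] [NormedAddCommGroup E] [InnerProductSpace 𝕜 E]

variable (𝕜) in
def nonorthGraph (v : ι → E) : SimpleGraph ι :=
  SimpleGraph.fromRel fun i j => ⟪v i, v j⟫_𝕜 ≠ 0

lemma nonorthGraph_adj {v : ι → E} {i j : ι} :
    (nonorthGraph 𝕜 v).Adj i j ↔ i ≠ j ∧ ⟪v i, v j⟫_𝕜 ≠ 0 := by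
  simp [nonorthGraph, inner_eq_zero_symm (x := v j)]

variable (𝕜) in
def orthComponent (y x : E) : E :=
  x - (⟪y, x⟫_𝕜 / ⟪y, y⟫_𝕜) • y

lemma inner_orthComponent_eq_zero (y x : E) : ⟪y, orthComponent 𝕜 y x⟫_𝕜 = 0 := by
  rcases eq_or_ne y 0 with rfl | hy
  · simp
  · rw [orthComponent, inner_sub_right, inner_smul_right,
      div_mul_cancel₀ _ (inner_self_ne_zero.2 hy), sub_self]

lemma eq_zero_of_inner_orthComponent_ne_zero {x y z : E} {a b : 𝕜} (hy : y ≠ 0)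
    (hz : ⟪z, orthComponent 𝕜 y x⟫_𝕜 ≠ 0) (hay : ⟪y, a • x + b • y⟫_𝕜 = 0)
    (haz : ⟪z, a • x + b • y⟫_𝕜 = 0) : a = 0 ∧ b = 0 := by
  have hdecomp :
      a • x + b • y = a • orthComponent 𝕜 y x + (b + a * (⟪y, x⟫_𝕜 / ⟪y, y⟫_𝕜)) • y := by
    simp only [orthComponent]; module
  have hb : b + a * (⟪y, x⟫_𝕜 / ⟪y, y⟫_𝕜) = 0 := by
    rw [hdecomp, inner_add_right, inner_smul_right, inner_smul_right, inner_orthComponent_eq_zero,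
      mul_zero, zero_add] at hay
    exact (mul_eq_zero.1 hay).resolve_right (inner_self_ne_zero.2 hy)
  have ha : a = 0 := by
    rw [hdecomp, hb, zero_smul, add_zero, inner_smul_right] at haz
    exact (mul_eq_zero.1 haz).resolve_right hz
  exact ⟨ha, by simpa [ha] using hb⟩

lemma inner_eq_zero_of_inner_orthComponent_eq_zero {v : ι → E} (hv : LinearIndependent 𝕜 v)
    {s t : ι} (hst : s ≠ t) {x : E} (hs : ⟪v t, orthComponent 𝕜 (v s) x⟫_𝕜 = 0)
    (ht : ⟪v s, orthComponent 𝕜 (v t) x⟫_𝕜 = 0) : ⟪v s, x⟫_𝕜 = 0 := by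
  set w := orthComponent 𝕜 (v s) x - orthComponent 𝕜 (v t) x
  have hws : ⟪v s, w⟫_𝕜 = 0 := by rw [inner_sub_right, inner_orthComponent_eq_zero, ht, sub_zero]
  have hwt : ⟪v t, w⟫_𝕜 = 0 := by
    rw [inner_sub_right, inner_orthComponent_eq_zero, hs, zero_sub, neg_zero]
  have hw : w = (⟪v t, x⟫_𝕜 / ⟪v t, v t⟫_𝕜) • v t - (⟪v s, x⟫_𝕜 / ⟪v s, v s⟫_𝕜) • v s := by
    simp only [w, orthComponent]; module
  -- `w` lies in the span of `v s, v t` and is orthogonal to both, hence vanishes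
  have hw0 : w = 0 := by
    rw [← inner_self_eq_zero (𝕜 := 𝕜)]
    nth_rw 1 [hw]
    rw [inner_sub_left, inner_smul_left, inner_smul_left, hws, hwt, mul_zero, mul_zero, sub_zero]
  have hcoef := (LinearIndepOn.pair_iff v hst).1 (hv.linearIndepOn _)
    (-(⟪v s, x⟫_𝕜 / ⟪v s, v s⟫_𝕜)) (⟪v t, x⟫_𝕜 / ⟪v t, v t⟫_𝕜) (by rw [← hw0, hw]; module)
  simpa [hv.ne_zero s] using hcoef.1

theorem exists_noncut_vertex_inner_orthComponent_ne_zero [Fintype ι] {v : ι → E}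
    (hv : LinearIndependent 𝕜 v) (hι : 2 < Fintype.card ι) (hconn : (nonorthGraph 𝕜 v).Connected) :
    ∃ q p r, ((nonorthGraph 𝕜 v).induce {q}ᶜ).Preconnected ∧ p ≠ q ∧ r ≠ q ∧
      ⟪v r, orthComponent 𝕜 (v p) (v q)⟫_𝕜 ≠ 0 := by
  classical
  obtain ⟨q, hq⟩ := hconn.exists_preconnected_induce_compl_singleton_of_finite
  have : Nontrivial ι := Fintype.one_lt_card_iff_nontrivial.1 (by omega)
  obtain ⟨s, hqs⟩ := hconn.preconnected.exists_adj_of_nontrivial q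
  obtain ⟨hqs, hsq⟩ := nonorthGraph_adj.1 hqs.symm
  obtain ⟨t, -, ht⟩ := Finset.exists_mem_notMem_of_card_lt_card (s := {q, s}) (t := Finset.univ)
    ((Finset.card_le_two).trans_lt (by simpa using hι))
  obtain ⟨htq, hts⟩ : t ≠ q ∧ t ≠ s := by simpa [not_or] using ht
  by_cases hst : ⟪v t, orthComponent 𝕜 (v s) (v q)⟫_𝕜 = 0
  · exact ⟨q, t, s, hq, htq, hqs, fun hts' =>
      hsq (inner_eq_zero_of_inner_orthComponent_eq_zero hv (Ne.symm hts) hst hts')⟩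
  · exact ⟨q, s, t, hq, hqs, htq, hst⟩

variable [CompleteSpace E]

lemma conj_eq_of_inner_ne_zero {T : E →L[𝕜] E} {x y : E} {μ μ' : 𝕜}
    (hx : adjoint T x = μ' • x) (hy : T y = μ • y) (hxy : ⟪x, y⟫_𝕜 ≠ 0) : conj μ' = μ := by
  have h := adjoint_inner_left T y x
  rw [hx, hy, inner_smul_left, inner_smul_right] at h
  exact mul_right_cancel₀ hxy h

variable {v : ι → E} {q p r : ι} {T : E →L[𝕜] E} {μ μ' : ι → 𝕜}

theorem eigenvalue_eq_of_preconnected_induce_compl (hv : ∀ i, v i ≠ 0)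
    (hq : ((nonorthGraph 𝕜 v).induce {q}ᶜ).Preconnected)
    (hT : ∀ i ≠ q, T (v i) = μ i • v i) (hT' : ∀ i ≠ q, adjoint T (v i) = μ' i • v i)
    {i j : ι} (hi : i ≠ q) (hj : j ≠ q) : μ i = μ j := by
  refine hq.eq_of_forall_adj (f := fun k : ({q}ᶜ : Set ι) => μ k) ?_ ⟨i, hi⟩ ⟨j, hj⟩
  rintro ⟨k, hk⟩ ⟨l, hl⟩ hkl
  rw [← conj_eq_of_inner_ne_zero (hT' k hk) (hT k hk) (inner_self_ne_zero.2 (hv k))]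
  exact conj_eq_of_inner_ne_zero (hT' k hk) (hT l hl) (nonorthGraph_adj.1 hkl).2

theorem eigenvalue_eq_and_eq_zero_of_apply_eq_smul_add_smul {c : 𝕜} (hv : ∀ i, v i ≠ 0)
    (hq : ((nonorthGraph 𝕜 v).induce {q}ᶜ).Preconnected) (hpq : p ≠ q) (hrq : r ≠ q)
    (hsep : ⟪v r, orthComponent 𝕜 (v p) (v q)⟫_𝕜 ≠ 0)
    (hT : ∀ i ≠ q, T (v i) = μ i • v i) (hT' : ∀ i ≠ q, adjoint T (v i) = μ' i • v i)
    (hTq : T (v q) = μ q • v q + c • v p) : μ q = μ p ∧ c = 0 := by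
  have horth : ∀ k ≠ q, ⟪v k, (μ q - μ p) • v q + c • v p⟫_𝕜 = 0 := by
    intro k hk
    have hk' : conj (μ' k) = μ p :=
      (conj_eq_of_inner_ne_zero (hT' k hk) (hT k hk) (inner_self_ne_zero.2 (hv k))).trans
        (eigenvalue_eq_of_preconnected_induce_compl hv hq hT hT' hk hpq)
    have h := adjoint_inner_left T (v q) (v k)
    rw [hT' k hk, inner_smul_left, hk'] at h
    rw [show (μ q - μ p) • v q + c • v p = T (v q) - μ p • v q by rw [hTq]; module,
      inner_sub_right, ← h, inner_smul_right, sub_self]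
  obtain ⟨h1, h2⟩ := eq_zero_of_inner_orthComponent_ne_zero (hv p) hsep (horth p hpq) (horth r hrq)
  exact ⟨sub_eq_zero.1 h1, h2⟩

end InnerProductSpace

section Matrix

variable {n : ℕ}

lemma opOf_mul_apply (A B : Mat n) (x : Euc n) : opOf (A * B) x = opOf A (opOf B x) := by
  simp only [opOf, map_mul]; rfl

lemma opOf_add_apply (A B : Mat n) (x : Euc n) : opOf (A + B) x = opOf A x + opOf B x := by
  simp only [opOf, map_add]; rfl

lemma opOf_smul_apply (c : ℂ) (A : Mat n) (x : Euc n) : opOf (c • A) x = c • opOf A x := by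
  simp only [opOf, map_smul]; rfl

@[simp] lemma opOf_zero_apply (x : Euc n) : opOf (0 : Mat n) x = 0 := by
  simp [opOf]

@[simp] lemma opOf_one_apply (x : Euc n) : opOf (1 : Mat n) x = x := by
  simp [opOf]

lemma opOf_conjTranspose (A : Mat n) : opOf Aᴴ = adjoint (opOf A) := by
  rw [← star_eq_conjTranspose, ← star_eq_adjoint]
  exact map_star _ _

variable (v : Module.Basis (Fin n) ℂ (Euc n))

lemma eq_of_opOf_basis {A B : Mat n} (h : ∀ i, opOf A (v i) = opOf B (v i)) : A = B :=
  toEuclideanCLM.injective <| ContinuousLinearMap.coe_injective <| v.ext h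

lemma isOpAlg_Dv : IsOpAlg (Dv v) := by
  refine ⟨fun i => ⟨0, by simp⟩, ?_, ?_, ?_⟩
  · intro A hA B hB i
    obtain ⟨a, ha⟩ := hA i
    obtain ⟨b, hb⟩ := hB i
    exact ⟨a + b, by rw [opOf_add_apply, ha, hb, add_smul]⟩
  · intro c A hA i
    obtain ⟨a, ha⟩ := hA i
    exact ⟨c * a, by rw [opOf_smul_apply, ha, smul_smul]⟩
  · intro A hA B hB i
    obtain ⟨a, ha⟩ := hA i
    obtain ⟨b, hb⟩ := hB i
    exact ⟨a * b, by rw [opOf_mul_apply, hb, map_smul, ha, smul_smul, mul_comm]⟩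

def basisSingle (p q : Fin n) : Mat n :=
  (toEuclideanCLM (𝕜 := ℂ)).symm
    (v.constr ℂ fun i => if i = q then v p else 0).toContinuousLinearMap

variable {v} {p q : Fin n}

lemma opOf_basisSingle_apply (i : Fin n) :
    opOf (basisSingle v p q) (v i) = if i = q then v p else 0 := by
  simp [opOf, basisSingle]

lemma mul_basisSingle {D : Mat n} {μ : ℂ} (hD : opOf D (v p) = μ • v p) :
    D * basisSingle v p q = μ • basisSingle v p q := by
  refine eq_of_opOf_basis v fun i => ?_
  rw [opOf_mul_apply, opOf_smul_apply, opOf_basisSingle_apply]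
  split_ifs <;> simp [hD]

lemma basisSingle_mul {D : Mat n} (hD : D ∈ Dv v) {μ : ℂ} (hDq : opOf D (v q) = μ • v q) :
    basisSingle v p q * D = μ • basisSingle v p q := by
  refine eq_of_opOf_basis v fun i => ?_
  obtain ⟨ν, hν⟩ := hD i
  rw [opOf_mul_apply, opOf_smul_apply, opOf_basisSingle_apply]
  split_ifs with hi
  · subst hi
    rw [hDq, map_smul, opOf_basisSingle_apply, if_pos rfl]
  · rw [hν, map_smul, opOf_basisSingle_apply, if_neg hi, smul_zero, smul_zero]

lemma basisSingle_mul_self (hpq : p ≠ q) : basisSingle v p q * basisSingle v p q = 0 :=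
  eq_of_opOf_basis v fun i => by
    rw [opOf_mul_apply, opOf_basisSingle_apply]
    split_ifs <;> simp [opOf_basisSingle_apply, hpq]

lemma basisSingle_notMem_Dv (hpq : p ≠ q) : basisSingle v p q ∉ Dv v := fun h => by
  obtain ⟨μ, hμ⟩ := h q
  rw [opOf_basisSingle_apply, if_pos rfl] at hμ
  have := (LinearIndepOn.pair_iff v hpq).1 (v.linearIndependent.linearIndepOn _) 1 (-μ)
    (by rw [hμ]; module)
  exact one_ne_zero this.1

variable (v p q) in
def extendDv : Set (Mat n) :=
  {A | ∃ D ∈ Dv v, ∃ c : ℂ, A = D + c • basisSingle v p q}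

lemma Dv_subset_extendDv : Dv v ⊆ extendDv v p q :=
  fun D hD => ⟨D, hD, 0, by rw [zero_smul, add_zero]⟩

lemma Dv_ne_extendDv (hpq : p ≠ q) : Dv v ≠ extendDv v p q := by
  intro h
  apply basisSingle_notMem_Dv hpq
  rw [h]
  exact ⟨0, (isOpAlg_Dv v).1, 1, by rw [zero_add, one_smul]⟩

lemma isOpAlg_extendDv (hpq : p ≠ q) : IsOpAlg (extendDv v p q) := by
  obtain ⟨h0, hadd, hsmul, hmul⟩ := isOpAlg_Dv v
  refine ⟨Dv_subset_extendDv h0, ?_, ?_, ?_⟩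
  · rintro _ ⟨D₁, hD₁, c₁, rfl⟩ _ ⟨D₂, hD₂, c₂, rfl⟩
    exact ⟨D₁ + D₂, hadd _ hD₁ _ hD₂, c₁ + c₂, by rw [add_smul]; abel⟩
  · rintro a _ ⟨D, hD, c, rfl⟩
    exact ⟨a • D, hsmul a _ hD, a * c, by rw [smul_add, smul_smul]⟩
  · rintro _ ⟨D₁, hD₁, c₁, rfl⟩ _ ⟨D₂, hD₂, c₂, rfl⟩
    obtain ⟨μ, hμ⟩ := hD₁ p
    obtain ⟨ν, hν⟩ := hD₂ q
    refine ⟨D₁ * D₂, hmul _ hD₁ _ hD₂, c₁ * ν + c₂ * μ, ?_⟩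
    simp only [mul_add, add_mul, mul_smul_comm, smul_mul_assoc, mul_basisSingle hμ,
      basisSingle_mul hD₂ hν, basisSingle_mul_self hpq, smul_smul, smul_zero, add_smul, add_zero,
      add_assoc]

theorem antisym_extendDv {r : Fin n} (hq : ((nonorthGraph ℂ v).induce {q}ᶜ).Preconnected)
    (hpq : p ≠ q) (hrq : r ≠ q) (hsep : ⟪v r, orthComponent ℂ (v p) (v q)⟫_ℂ ≠ 0) :
    Antisym (extendDv v p q) := by
  rintro _ ⟨D, hD, c, rfl⟩ ⟨D', hD', c', hadj⟩
  choose μ hμ using hD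
  choose μ' hμ' using hD'
  have hT : ∀ i ≠ q, opOf (D + c • basisSingle v p q) (v i) = μ i • v i := fun i hi => by
    rw [opOf_add_apply, opOf_smul_apply, opOf_basisSingle_apply, if_neg hi, smul_zero, add_zero,
      hμ]
  have hT' : ∀ i ≠ q, adjoint (opOf (D + c • basisSingle v p q)) (v i) = μ' i • v i :=
    fun i hi => by
      rw [← opOf_conjTranspose, hadj, opOf_add_apply, opOf_smul_apply, opOf_basisSingle_apply,
        if_neg hi, smul_zero, add_zero, hμ']
  have hTq : opOf (D + c • basisSingle v p q) (v q) = μ q • v q + c • v p := by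
    rw [opOf_add_apply, opOf_smul_apply, opOf_basisSingle_apply, if_pos rfl, hμ]
  have hv : ∀ i, v i ≠ 0 := v.ne_zero
  obtain ⟨hμq, rfl⟩ :=
    eigenvalue_eq_and_eq_zero_of_apply_eq_smul_add_smul hv hq hpq hrq hsep hT hT' hTq
  have hμp : ∀ i, μ i = μ p := fun i => by
    rcases eq_or_ne i q with rfl | hi
    · exact hμq
    · exact eigenvalue_eq_of_preconnected_induce_compl hv hq hT hT' hi hpq
  refine ⟨μ p, eq_of_opOf_basis v fun i => ?_⟩
  rw [zero_smul, add_zero, hμ, hμp, opOf_smul_apply, opOf_one_apply]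

end Matrix

/-- If `n > 2` and `v` is a basis of `ℂⁿ` with connected nonorthogonality graph, then `𝒟_v`
is not maximal antisymmetric: some antisymmetric operator algebra properly contains it. -/
theorem Dv_not_maximal_antisym (n : ℕ) (hn : 2 < n) (v : Module.Basis (Fin n) ℂ (Euc n))
    (hconn : (SimpleGraph.fromRel fun i j : Fin n => (inner ℂ (v i) (v j) : ℂ) ≠ 0).Connected) :
    ∃ S : Set (Mat n), IsOpAlg S ∧ Antisym S ∧ Dv v ⊆ S ∧ Dv v ≠ S := by
  obtain ⟨q, p, r, hq, hpq, hrq, hsep⟩ :=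
    exists_noncut_vertex_inner_orthComponent_ne_zero v.linearIndependent (by simpa using hn) hconn
  exact ⟨extendDv v p q, isOpAlg_extendDv hpq, antisym_extendDv hq hpq hrq hsep,
    Dv_subset_extendDv, Dv_ne_extendDv hpq⟩
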